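/- Let A, B ∈ ℂ^{n×n} both be strictly accretive (Hermitian parts positive definite). Then −1 is not an eigenvalue of AB, i.e., I + AB is invertible. -/

import Mathlib

open Matrix

/-! If `(1 + A B) x = 0` with `x ≠ 0`, put `y = B x`, so `A y = -x`. Then `Re ⟪x, y⟫ = Re ⟪x, B x⟫ > 0`,
while `0 < Re ⟪y, A y⟫ = -Re ⟪y, x⟫ = -Re ⟪x, y⟫`. -/

namespace Matrix

variable {𝕜 m : Type*} [RCLike 𝕜] [Fintype m]

def IsStrictlyAccretive (A : Matrix m m 𝕜) : Prop :=
  ∀ x : m → 𝕜, x ≠ 0 → 0 < RCLike.re (star x ⬝ᵥ A *ᵥ x)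

theorem re_star_dotProduct_comm (x y : m → 𝕜) :
    RCLike.re (star y ⬝ᵥ x) = RCLike.re (star x ⬝ᵥ y) := by
  rw [star_dotProduct, RCLike.star_def, RCLike.conj_re]

theorem IsStrictlyAccretive.eq_zero_of_mulVec_mulVec_eq_neg {A B : Matrix m m 𝕜}
    (hA : A.IsStrictlyAccretive) (hB : B.IsStrictlyAccretive) {x : m → 𝕜}
    (hx : A *ᵥ B *ᵥ x = -x) : x = 0 := by
  by_contra hx0
  set y := B *ᵥ x
  have hy0 : y ≠ 0 := fun hy => hx0 (by simpa [hy] using hx.symm)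
  have hxy := hB x hx0
  have hyx := hA y hy0
  rw [hx, dotProduct_neg, map_neg, re_star_dotProduct_comm] at hyx
  linarith

theorem IsStrictlyAccretive.isUnit_one_add_mul [DecidableEq m] {A B : Matrix m m 𝕜}
    (hA : A.IsStrictlyAccretive) (hB : B.IsStrictlyAccretive) : IsUnit (1 + A * B) := by
  rw [isUnit_iff_isUnit_det, isUnit_iff_ne_zero]
  intro hdet
  obtain ⟨x, hx0, hx⟩ := exists_mulVec_eq_zero_iff.2 hdet
  rw [add_mulVec, one_mulVec, ← mulVec_mulVec] at hx
  exact hx0 (hA.eq_zero_of_mulVec_mulVec_eq_neg hB (eq_neg_of_add_eq_zero_right hx))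

end Matrix

/-- If `A` and `B` are strictly accretive then `I + AB` is invertible. -/
theorem one_add_mul_isUnit_of_strictlyAccretive {n : ℕ}
    (A B : Matrix (Fin n) (Fin n) ℂ)
    (hA : ∀ x : Fin n → ℂ, x ≠ 0 → 0 < (star x ⬝ᵥ A *ᵥ x).re)
    (hB : ∀ x : Fin n → ℂ, x ≠ 0 → 0 < (star x ⬝ᵥ B *ᵥ x).re) :
    IsUnit (1 + A * B) :=
  IsStrictlyAccretive.isUnit_one_add_mul hA hB
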